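/- There exists a constant C₁ > 0, independent of ε, such that for every ε > 0 and every x ∈ ℝ one has −C₁ · ε · √(a_ε(x)) ≤ a_ε'(x) ≤ 0. -/

import Mathlib

/-- The smooth bump ingredient: `f x = exp (-1/x)` for `x > 0`, and `0` for `x ≤ 0`. -/
noncomputable def paperF (x : ℝ) : ℝ := if 0 < x then Real.exp (-1 / x) else 0

/-- The smooth transition function `ψ x = f x / (f x + f (1 - x))`. -/
noncomputable def paperPsi (x : ℝ) : ℝ := paperF x / (paperF x + paperF (1 - x))

/-- The cutoff function `a_ε x = ψ(2 - ε x)²`. -/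
noncomputable def paperA (ε x : ℝ) : ℝ := (paperPsi (2 - ε * x)) ^ 2

/-!
`ψ` is Mathlib's `Real.smoothTransition`: it is monotone, and its derivative is continuous and
vanishes outside `[0, 1]`, so `0 ≤ ψ' ≤ M` for some `M`. By the chain rule
`a_ε' x = -2ε ψ(2 - εx) ψ'(2 - εx)`, and `√(a_ε x) = ψ(2 - εx)` because `ψ ≥ 0`;
hence `C₁ = 2M` works.
-/

open Real Topology

lemma paperF_eq_expNegInvGlue : paperF = expNegInvGlue := by
  funext x
  by_cases hx : 0 < x
  · simp [paperF, expNegInvGlue, hx, not_le.2 hx, neg_div]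
  · simp [paperF, expNegInvGlue, hx, not_lt.1 hx]

lemma paperPsi_eq_smoothTransition : paperPsi = smoothTransition := by
  funext x
  simp [paperPsi, smoothTransition, paperF_eq_expNegInvGlue]

namespace Real.smoothTransition

lemma hasCompactSupport_deriv : HasCompactSupport (deriv smoothTransition) := by
  refine HasCompactSupport.intro (isCompact_Icc (a := 0) (b := 1)) fun u hu => ?_
  rcases not_and_or.1 hu with hu | hu
  · have : smoothTransition =ᶠ[𝓝 u] fun _ => 0 := by
      filter_upwards [gt_mem_nhds (not_le.1 hu)] with y hy using zero_of_nonpos hy.le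
    rw [this.deriv_eq, deriv_const]
  · have : smoothTransition =ᶠ[𝓝 u] fun _ => 1 := by
      filter_upwards [lt_mem_nhds (not_le.1 hu)] with y hy using one_of_one_le hy.le
    rw [this.deriv_eq, deriv_const]

lemma exists_pos_deriv_le : ∃ M, 0 < M ∧ ∀ u, deriv smoothTransition u ≤ M := by
  have hcont : Continuous (deriv smoothTransition) :=
    (smoothTransition.contDiff (n := 1)).continuous_deriv le_rfl
  obtain ⟨M, hM⟩ := hcont.bddAbove_range_of_hasCompactSupport hasCompactSupport_deriv
  exact ⟨max M 1, by positivity, fun u => (hM ⟨u, rfl⟩).trans (le_max_left M 1)⟩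

end Real.smoothTransition

lemma hasDerivAt_sq_comp_const_sub_mul {g : ℝ → ℝ} {c ε x : ℝ}
    (hg : DifferentiableAt ℝ g (c - ε * x)) :
    HasDerivAt (fun y => g (c - ε * y) ^ 2)
      (-(2 * ε * g (c - ε * x) * deriv g (c - ε * x))) x := by
  have hinner : HasDerivAt (fun y => c - ε * y) (-ε) x := by
    simpa using ((hasDerivAt_id x).const_mul ε).const_sub c
  exact ((hg.hasDerivAt.comp x hinner).fun_pow 2).congr_deriv
    (by simp only [Function.comp_apply]; ring)

lemma deriv_sq_comp_const_sub_mul_bounds {g : ℝ → ℝ} {M c ε : ℝ} (hg : Differentiable ℝ g)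
    (hmono : Monotone g) (hnonneg : ∀ u, 0 ≤ g u) (hM : ∀ u, deriv g u ≤ M) (hε : 0 ≤ ε)
    (x : ℝ) :
    -(2 * M) * ε * √(g (c - ε * x) ^ 2) ≤ deriv (fun y => g (c - ε * y) ^ 2) x ∧
      deriv (fun y => g (c - ε * y) ^ 2) x ≤ 0 := by
  set u := c - ε * x
  rw [(hasDerivAt_sq_comp_const_sub_mul (hg u)).deriv, sqrt_sq (hnonneg u)]
  have hgu := hnonneg u
  have hderiv := hmono.deriv_nonneg (x := u)
  constructor
  · have : ε * g u * deriv g u ≤ ε * g u * M := by gcongr; exact hM u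
    linarith
  · have : 0 ≤ ε * g u * deriv g u := by positivity
    linarith

/-- there is a constant `C₁ > 0`, independent of `ε`, such that for all
`ε > 0` and all `x`, `-C₁ · ε · √(a_ε x) ≤ a_ε'(x) ≤ 0`. -/
theorem cutoff_deriv_bound :
    ∃ C₁ : ℝ, 0 < C₁ ∧ ∀ ε : ℝ, 0 < ε → ∀ x : ℝ,
      -C₁ * ε * Real.sqrt (paperA ε x) ≤ deriv (paperA ε) x ∧
      deriv (paperA ε) x ≤ 0 := by
  obtain ⟨M, hM_pos, hM⟩ := smoothTransition.exists_pos_deriv_le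
  refine ⟨2 * M, by positivity, fun ε hε x => ?_⟩
  have hA : paperA ε = fun y => smoothTransition (2 - ε * y) ^ 2 := by
    funext y
    rw [paperA, paperPsi_eq_smoothTransition]
  rw [hA]
  exact deriv_sq_comp_const_sub_mul_bounds
    ((smoothTransition.contDiff (n := 1)).differentiable one_ne_zero)
    smoothTransition.monotone smoothTransition.nonneg hM hε.le x
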